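/- Let n_1, d, N ≥ 1, let P(x,Y) ∈ (ℂ[[x,Y]])^N with x ∈ ℂ^{n_1}, Y ∈ ℂ^N, and let φ_0(x,t) ∈ (ℂ[[x,t]])^N with φ_0(0) = 0, t ∈ ℂ^d, such that det(∂P/∂Y)(x, φ_0(x,t)) ≢ 0. Let α_0 ∈ ℕ^{n_1} and β_0 ∈ ℕ^d be such that the Taylor coefficient ∂^{α_0}_x ∂^{β_0}_t|_{(x,t)=0} det(∂P/∂Y)(x, φ_0(x,t)) is nonzero. Then for any formal power series mapping φ(x,t) ∈ (ℂ[[x,t]])^N satisfying (1) ∂^α_x ∂^β_t φ(0) = ∂^α_x ∂^β_t φ_0(0) for all (α,β) ∈ ℕ^{n_1}×ℕ^d with |α| ≤ |α_0| and |β| ≤ |β_0|, and (2) for some k ∈ ℕ, ∂^β_t|_{t=0} P(x, φ(x,t)) = ∂^β_t|_{t=0} P(x, φ_0(x,t)) for all β with |β| ≤ |β_0| + k, one has ∂^β_t φ(x,0) = ∂^β_t φ_0(x,0) for every β ∈ ℕ^d with |β| ≤ k. -/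

import Mathlib

/-!
Write `u = (x, φ)` and `v = (x, φ₀)`. Telescoping every monomial of `P` gives
`P(u) - P(v) = C · (φ - φ₀)` for a matrix `C` of power series which, monomial by monomial, is
congruent to `∂P/∂Y (v)` modulo the entries of `φ - φ₀`. These entries have no coefficient at or
below `(α₀, β₀)`, hence neither has `C - ∂P/∂Y (v)`, and `det C` has the same nonzero coefficient
at `(α₀, β₀)` as `det ∂P/∂Y (v)`: its order in `t` is at most `|β₀|`. By Cramer's rule
`det C · (φ - φ₀) = adj C · (P(u) - P(v))` has order in `t` greater than `|β₀| + k`, and since the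
order in `t` is additive on the domain `ℂ[[x, t]]`, `φ - φ₀` has order in `t` greater than `k`.
-/

open MvPowerSeries

noncomputable section

namespace Paper

variable {σ τ : Type*}

/-- Total degree `|α|` of a multi-index. -/
def msize (α : σ →₀ ℕ) : ℕ := α.sum fun _ k => k

/-- Multi-index factorial `α!`. -/
def mfact (β : σ →₀ ℕ) : ℕ := β.prod fun _ k => k.factorial

/-- A formal power series is convergent if its coefficients satisfy a Cauchy-type estimate
`‖f_α‖ ≤ C r^{-|α|}`. -/
def IsConv (f : MvPowerSeries σ ℂ) : Prop :=
  ∃ C r : ℝ, 0 < C ∧ 0 < r ∧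
    ∀ α : σ →₀ ℕ, ‖MvPowerSeries.coeff α f‖ ≤ C * r⁻¹ ^ msize α

/-- Coefficientwise complex conjugation `f̄`. -/
def sconj (f : MvPowerSeries σ ℂ) : MvPowerSeries σ ℂ :=
  fun α => starRingEnd ℂ (MvPowerSeries.coeff α f)

/-- Iterated partial derivative `∂^β f`. -/
def dpow (β : σ →₀ ℕ) (f : MvPowerSeries σ ℂ) : MvPowerSeries σ ℂ :=
  fun α => (((β.prod fun i k => (α i + k).choose k * k.factorial) : ℕ) : ℂ) *
    MvPowerSeries.coeff (α + β) f

/-- First-order partial derivative in the direction `i`. -/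
def pd (i : σ) (f : MvPowerSeries σ ℂ) : MvPowerSeries σ ℂ :=
  dpow (Finsupp.single i 1) f

/-- Apply `∂^β`, then keep only the variables in the range of `e` (an injection),
setting all the others equal to `0`. -/
def dAt0 (e : σ → τ) (β : τ →₀ ℕ) (f : MvPowerSeries τ ℂ) : MvPowerSeries σ ℂ :=
  fun γ => MvPowerSeries.coeff (Finsupp.mapDomain e γ) (dpow β f)

/-- Substitution of the power series `a s` (all assumed to have vanishing constant term)
for the variables of `f`. -/
def substC [Fintype σ] [DecidableEq σ] (a : σ → MvPowerSeries τ ℂ) (f : MvPowerSeries σ ℂ) :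
    MvPowerSeries τ ℂ :=
  fun γ => ∑ α ∈ Finset.Iic (Finsupp.equivFunOnFinite.symm fun _ : σ => msize γ),
    MvPowerSeries.coeff α f * MvPowerSeries.coeff γ (∏ s, (a s) ^ (α s))

/-- Renaming of variables along an injection `e`. -/
def inject [Fintype σ] [DecidableEq σ] (e : σ → τ) (f : MvPowerSeries σ ℂ) :
    MvPowerSeries τ ℂ :=
  substC (fun s => MvPowerSeries.X (e s)) f

/-- The Jacobian determinant of a formal self-mapping. -/
def jacDet {ι : Type*} [Fintype ι] [DecidableEq ι] (h : ι → MvPowerSeries ι ℂ) :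
    MvPowerSeries ι ℂ :=
  (Matrix.of fun k l => pd l (h k)).det

/-- The sum of a (convergent) power series at a point. -/
def evalAt [Fintype σ] (f : MvPowerSeries σ ℂ) (x : σ → ℂ) : ℂ :=
  ∑' α : σ →₀ ℕ, MvPowerSeries.coeff α f * ∏ i, x i ^ α i

/-- The variables `(z, χ, τ) ∈ ℂ^n × ℂ^n × ℂ^d`. -/
abbrev W3 (n d : ℕ) : Type := Fin n ⊕ (Fin n ⊕ Fin d)

variable {n d : ℕ}

/-- `Q` is a convergent defining series, in normal coordinates, of a germ at `0` of a
real-analytic generic submanifold of codimension `d` in `ℂ^{n+d}`:  it is convergent,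
satisfies the normality conditions `Q(0,χ,τ) = τ`, `Q(z,0,τ) = τ` and the reality condition
`Q(z,χ,Q̄(χ,z,τ)) = τ`. -/
structure IsDefSeries (Q : Fin d → MvPowerSeries (W3 n d) ℂ) : Prop where
  conv : ∀ c, IsConv (Q c)
  normal1 : ∀ c, dAt0 (Sum.inr : Fin n ⊕ Fin d → W3 n d) 0 (Q c)
      = MvPowerSeries.X (Sum.inr c)
  normal2 : ∀ c, dAt0 (Sum.map (id : Fin n → Fin n) (Sum.inr : Fin d → Fin n ⊕ Fin d)) 0 (Q c)
      = MvPowerSeries.X (Sum.inr c)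
  reality : ∀ c, substC (fun v : W3 n d => match v with
      | Sum.inl i => MvPowerSeries.X (Sum.inl i)
      | Sum.inr (Sum.inl i) => MvPowerSeries.X (Sum.inr (Sum.inl i))
      | Sum.inr (Sum.inr c') => substC (fun w : W3 n d => match w with
          | Sum.inl i => MvPowerSeries.X (Sum.inr (Sum.inl i))
          | Sum.inr (Sum.inl i) => MvPowerSeries.X (Sum.inl i)
          | Sum.inr (Sum.inr c'') => MvPowerSeries.X (Sum.inr (Sum.inr c'')))
          (sconj (Q c'))) (Q c) = MvPowerSeries.X (Sum.inr (Sum.inr c))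

/-- Composition `f(z, Q(z,χ,τ))`, a series in the variables `(z,χ,τ)`. -/
def compQ (Q : Fin d → MvPowerSeries (W3 n d) ℂ) (f : MvPowerSeries (Fin n ⊕ Fin d) ℂ) :
    MvPowerSeries (W3 n d) ℂ :=
  substC (fun w : Fin n ⊕ Fin d => match w with
    | Sum.inl i => MvPowerSeries.X (Sum.inl i)
    | Sum.inr c => Q c) f

/-- The components of `H̄(χ,τ)`, viewed as series in the variables `(z,χ,τ)`. -/
def barSub (H : Fin n ⊕ Fin d → MvPowerSeries (Fin n ⊕ Fin d) ℂ) (v : Fin n ⊕ Fin d) :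
    MvPowerSeries (W3 n d) ℂ :=
  inject (Sum.inr : Fin n ⊕ Fin d → W3 n d) (sconj (H v))

/-- `H` sends `M` into `M'`:  `Q'(F(z,Q(z,χ,τ)), H̄(χ,τ)) = G(z,Q(z,χ,τ))`. -/
def Sends (Q Q' : Fin d → MvPowerSeries (W3 n d) ℂ)
    (H : Fin n ⊕ Fin d → MvPowerSeries (Fin n ⊕ Fin d) ℂ) : Prop :=
  ∀ r, substC (fun v : W3 n d => match v with
      | Sum.inl i => compQ Q (H (Sum.inl i))
      | Sum.inr v' => barSub H v') (Q' r)
    = compQ Q (H (Sum.inr r))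

/-- The Taylor coefficient `Q_α(χ,τ)` of a series `Q(z,χ,τ)` with respect to `z^α`. -/
def coeffZ (α : Fin n →₀ ℕ) (f : MvPowerSeries (W3 n d) ℂ) :
    MvPowerSeries (Fin n ⊕ Fin d) ℂ :=
  fun γ => MvPowerSeries.coeff
    (Finsupp.mapDomain Sum.inl α + Finsupp.mapDomain Sum.inr γ) f

/-- Holomorphic nondegeneracy at `0`, via Stanton's criterion:  there are multi-indices
`α^1,…,α^n` and components `r_1,…,r_n` such that `det (∂Q^{r_k}_{α^k}/∂χ_l) ≢ 0`. -/
def HolNondeg (Q : Fin d → MvPowerSeries (W3 n d) ℂ) : Prop :=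
  ∃ (A : Fin n → (Fin n →₀ ℕ)) (rr : Fin n → Fin d),
    (Matrix.of fun k l : Fin n => pd (Sum.inl l) (coeffZ (A k) (Q (rr k)))).det ≠ 0

/-- The reflection function `R(z',χ,τ) = Q'(z', H̄(χ,τ))` (components);  the ambient
variables `W3 n d` are read as `(z', (χ, τ))`. -/
def Refl (Q' : Fin d → MvPowerSeries (W3 n d) ℂ)
    (H : Fin n ⊕ Fin d → MvPowerSeries (Fin n ⊕ Fin d) ℂ) (r : Fin d) :
    MvPowerSeries (W3 n d) ℂ :=
  substC (fun v : W3 n d => match v with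
    | Sum.inl i => MvPowerSeries.X (Sum.inl i)
    | Sum.inr v' => barSub H v') (Q' r)

/-- Variables `(z^1, χ^1, z^2, χ^2, …)` (j blocks of size n, block `2k` is `z^{k+1}` and
block `2k+1` is `χ^{k+1}`) together with `t ∈ ℂ^d`. -/
abbrev SVar (n d j : ℕ) : Type := (Fin j × Fin n) ⊕ Fin d

/-- The Segre set mappings `U_j`. -/
def Useg (Q : Fin d → MvPowerSeries (W3 n d) ℂ) :
    (j : ℕ) → Fin d → MvPowerSeries (SVar n d j) ℂ
  | 0 => fun c => MvPowerSeries.X (Sum.inr c)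
  | 1 => fun c => MvPowerSeries.X (Sum.inr c)
  | m + 2 => fun c =>
      substC (fun v : SVar n d (m + 1) => match v with
        | Sum.inl (k, a) => MvPowerSeries.X (Sum.inl (Fin.castSucc k, a))
        | Sum.inr c' => substC (fun w : W3 n d => match w with
            | Sum.inl a => MvPowerSeries.X (Sum.inl (⟨m, by omega⟩, a))
            | Sum.inr (Sum.inl a) => MvPowerSeries.X (Sum.inl (⟨m + 1, by omega⟩, a))
            | Sum.inr (Sum.inr c'') => MvPowerSeries.X (Sum.inr c''))
            (if (m + 2) % 2 = 0 then Q c' else sconj (Q c')))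
        (Useg Q (m + 1) c)

/-- The Segre set mappings `V_j = (z^1, U_j)`. -/
def Vseg (Q : Fin d → MvPowerSeries (W3 n d) ℂ) (j : ℕ) :
    Fin n ⊕ Fin d → MvPowerSeries (SVar n d j) ℂ :=
  fun c => match c with
  | Sum.inl i => if h : 0 < j then MvPowerSeries.X (Sum.inl (⟨0, h⟩, i)) else 0
  | Sum.inr c' => Useg Q j c'

/-- Minimality of `M` at `0`, expressed through the Segre mapping of order `2(d+1)`:
there is a sequence of points `p_k → 0` at which `V_{2(d+1)}(p_k;0) = 0` and the Jacobian
matrix of `p ↦ V_{2(d+1)}(p;0)` has rank `n+d`. -/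
def Minimal (Q : Fin d → MvPowerSeries (W3 n d) ℂ) : Prop :=
  ∃ p : ℕ → ((Fin (2 * (d + 1)) × Fin n) → ℂ),
    Filter.Tendsto p Filter.atTop (nhds 0) ∧
    ∀ k, (∀ c, evalAt (Vseg Q (2 * (d + 1)) c) (Sum.elim (p k) 0) = 0) ∧
      (Matrix.of fun (c : Fin n ⊕ Fin d) (v : Fin (2 * (d + 1)) × Fin n) =>
        evalAt (pd (Sum.inl v) (Vseg Q (2 * (d + 1)) c)) (Sum.elim (p k) 0)).rank = n + d

/-- Minimality at `0` for a hypersurface in normal coordinates: `Q(z,χ,0) ≢ 0`. -/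
def MinimalHyp (Q : Fin 1 → MvPowerSeries (W3 n 1) ℂ) : Prop :=
  dAt0 (Sum.map (id : Fin n → Fin n) (Sum.inl : Fin n → Fin n ⊕ Fin 1)) 0 (Q 0) ≠ 0

/-- `M'` contains no (nonconstant) formal holomorphic curve through `0`:  the only formal
curve `γ = (c, g)` with `γ(0) = 0` and `g(t) = Q'(c(t), c̄(s), ḡ(s))` is the constant one. -/
def NoFormalCurve (Q' : Fin 1 → MvPowerSeries (W3 n 1) ℂ) : Prop :=
  ∀ (c : Fin n → MvPowerSeries Unit ℂ) (g : MvPowerSeries Unit ℂ),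
    (∀ i, MvPowerSeries.constantCoeff (c i) = 0) →
    MvPowerSeries.constantCoeff g = 0 →
    inject (Sum.inl : Unit → Unit ⊕ Unit) g =
      substC (fun v : W3 n 1 => match v with
        | Sum.inl i => inject (Sum.inl : Unit → Unit ⊕ Unit) (c i)
        | Sum.inr (Sum.inl i) => inject (Sum.inr : Unit → Unit ⊕ Unit) (sconj (c i))
        | Sum.inr (Sum.inr _) => inject (Sum.inr : Unit → Unit ⊕ Unit) (sconj g)) (Q' 0) →
    (∀ i, c i = 0) ∧ g = 0

/-- The determinant `det ∂_z(F(z,Q(z,χ,τ)))`, a series in `(z,χ,τ)`. -/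
def Dser (Q : Fin d → MvPowerSeries (W3 n d) ℂ)
    (H : Fin n ⊕ Fin d → MvPowerSeries (Fin n ⊕ Fin d) ℂ) : MvPowerSeries (W3 n d) ℂ :=
  (Matrix.of fun i l : Fin n => pd (Sum.inl l) (compQ Q (H (Sum.inl i)))).det

/-- `∂^η_z ∂^δ_τ|_{(z,τ)=(0,0)}`, a series in `χ`. -/
def dZT0 (η : Fin n →₀ ℕ) (δ : Fin d →₀ ℕ) (f : MvPowerSeries (W3 n d) ℂ) :
    MvPowerSeries (Fin n) ℂ :=
  dAt0 (fun i : Fin n => Sum.inr (Sum.inl i))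
    (Finsupp.mapDomain Sum.inl η + Finsupp.mapDomain (fun c => Sum.inr (Sum.inr c)) δ) f

/-- `∂^β_τ|_{τ=0}` of a series in `(χ,τ)`, a series in `χ`. -/
def dTau0 (β : Fin d →₀ ℕ) (f : MvPowerSeries (Fin n ⊕ Fin d) ℂ) : MvPowerSeries (Fin n) ℂ :=
  dAt0 (Sum.inl : Fin n → Fin n ⊕ Fin d) (Finsupp.mapDomain Sum.inr β) f

/-- `Q'_α(H̄(χ,τ))` (r-th component), a series in `(χ,τ)`. -/
def QpaH (Q' : Fin d → MvPowerSeries (W3 n d) ℂ)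
    (H : Fin n ⊕ Fin d → MvPowerSeries (Fin n ⊕ Fin d) ℂ) (α : Fin n →₀ ℕ) (r : Fin d) :
    MvPowerSeries (Fin n ⊕ Fin d) ℂ :=
  substC (fun v => sconj (H v)) (coeffZ α (Q' r))

/-- `F(V_j(z^1,χ^2,z^2,…;0))`, embedded as a series on the blocks `1,…,j` of
`(χ^1,z^1,χ^2,z^2,…)` (j+1 blocks), with `t = 0`. -/
def FVsetZ (Q : Fin d → MvPowerSeries (W3 n d) ℂ)
    (H : Fin n ⊕ Fin d → MvPowerSeries (Fin n ⊕ Fin d) ℂ) (j : ℕ) (i : Fin n) :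
    MvPowerSeries (SVar n d (j + 1)) ℂ :=
  substC (fun v : SVar n d j => match v with
    | Sum.inl (k, a) => MvPowerSeries.X (Sum.inl (Fin.succ k, a))
    | Sum.inr _ => 0)
    (substC (Vseg Q j) (H (Sum.inl i)))

/-- `H̄(V̄_{j+1}(χ^1,z^1,χ^2,z^2,…;t))` (components). -/
def HbarV (Q : Fin d → MvPowerSeries (W3 n d) ℂ)
    (H : Fin n ⊕ Fin d → MvPowerSeries (Fin n ⊕ Fin d) ℂ) (j : ℕ) (v : Fin n ⊕ Fin d) :
    MvPowerSeries (SVar n d (j + 1)) ℂ :=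
  substC (fun w : Fin n ⊕ Fin d => sconj (Vseg Q (j + 1) w)) (sconj (H v))

/-- `(∂^α_{z'} Q'^r)(F(V_j(z^1,χ^2,…;0)), H̄(V̄_{j+1}(χ^1,z^1,χ^2,…;t)))`. -/
def Eexpr (Q Q' : Fin d → MvPowerSeries (W3 n d) ℂ)
    (H : Fin n ⊕ Fin d → MvPowerSeries (Fin n ⊕ Fin d) ℂ) (j : ℕ)
    (α : Fin n →₀ ℕ) (r : Fin d) : MvPowerSeries (SVar n d (j + 1)) ℂ :=
  substC (fun v : W3 n d => match v with
    | Sum.inl i => FVsetZ Q H j i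
    | Sum.inr v' => HbarV Q H j v')
    (dpow (Finsupp.mapDomain Sum.inl α) (Q' r))

/-- The substitution `z ↦ z^1`, `χ ↦ χ^1`, `τ ↦ Ū_{j+1}(χ^1,z^1,χ^2,…;t)`, where the blocks
of `SVar n d (j+1)` are read as `(χ^1, z^1, χ^2, z^2, …)`. -/
def tauSubst (Q : Fin d → MvPowerSeries (W3 n d) ℂ) (j : ℕ) (hj : 1 ≤ j) :
    W3 n d → MvPowerSeries (SVar n d (j + 1)) ℂ :=
  fun v => match v with
  | Sum.inl i => MvPowerSeries.X (Sum.inl (⟨1, by omega⟩, i))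
  | Sum.inr (Sum.inl i) => MvPowerSeries.X (Sum.inl (⟨0, by omega⟩, i))
  | Sum.inr (Sum.inr c) => sconj (Useg Q (j + 1) c)

/-- `Φ_j = det(∂_{z^1}(F(z^1,Q(z^1,χ^1,τ))))|_{τ = Ū_{j+1}(χ^1,z^1,χ^2,…;t)}`. -/
def PhiJ (Q : Fin d → MvPowerSeries (W3 n d) ℂ)
    (H : Fin n ⊕ Fin d → MvPowerSeries (Fin n ⊕ Fin d) ℂ) (j : ℕ) (hj : 1 ≤ j) :
    MvPowerSeries (SVar n d (j + 1)) ℂ :=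
  substC (tauSubst Q j hj) (Dser Q H)

/-- `(∂^η_{z^1} H^{(r)}(z^1,Q(z^1,χ^1,τ)))|_{τ = Ū_{j+1}(χ^1,z^1,χ^2,…;t)}` (component `c`
of `H^{(r)} = (F, G^r)`). -/
def PsiJ (Q : Fin d → MvPowerSeries (W3 n d) ℂ)
    (H : Fin n ⊕ Fin d → MvPowerSeries (Fin n ⊕ Fin d) ℂ) (j : ℕ) (hj : 1 ≤ j)
    (c : Fin n ⊕ Unit) (r : Fin d) (η : Fin n →₀ ℕ) :
    MvPowerSeries (SVar n d (j + 1)) ℂ :=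
  substC (tauSubst Q j hj)
    (dpow (Finsupp.mapDomain Sum.inl η)
      (compQ Q (H (Sum.elim Sum.inl (fun _ => Sum.inr r) c))))

end Paper

theorem Matrix.det_sub_det_mem {A n : Type*} [CommRing A] [Fintype n] [DecidableEq n]
    {I : Ideal A} {M N : Matrix n n A} (h : ∀ i j, M i j - N i j ∈ I) : M.det - N.det ∈ I := by
  rw [← Ideal.Quotient.eq, RingHom.map_det, RingHom.map_det]
  congr 1
  ext i j
  exact Ideal.Quotient.eq.mpr (h i j)

def Finsupp.degreeLE (σ : Type*) [Finite σ] (m : ℕ) : Finset (σ →₀ ℕ) :=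
  (Finsupp.finite_of_degree_le m).toFinset

theorem Finsupp.mem_degreeLE {σ : Type*} [Finite σ] {m : ℕ} {α : σ →₀ ℕ} :
    α ∈ Finsupp.degreeLE σ m ↔ α.degree ≤ m :=
  Set.Finite.mem_toFinset _

section Telescope

variable {σ A : Type*} [Fintype σ] [LinearOrder σ]

@[to_additive]
theorem Finset.mul_prod_filter_lt_mul_prod_filter_gt {M : Type*} [CommMonoid M] (g : σ → M)
    (s : σ) : g s * (∏ t with t < s, g t) * ∏ t with s < t, g t = ∏ t, g t := by
  rw [mul_assoc, ← Finset.mul_prod_erase _ _ (Finset.mem_univ s),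
    ← Finset.prod_filter_mul_prod_filter_not (Finset.univ.erase s) (· < s)]
  congr 2 <;> refine Finset.prod_congr (Finset.ext fun t => ?_) fun _ _ => rfl
  · simp +contextual [ne_of_lt]
  · simp only [Finset.mem_filter, Finset.mem_univ, Finset.mem_erase, true_and, not_lt]
    grind

variable [CommRing A]

/-- The factor of `u s - v s` when `∏ t, u t ^ α t - ∏ t, v t ^ α t` is telescoped one variable
at a time, in the order of `σ`. -/
def telescopeFactor (u v : σ → A) (α : σ →₀ ℕ) (s : σ) : A :=
  (∑ j ∈ Finset.range (α s), u s ^ j * v s ^ (α s - 1 - j)) *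
    (∏ t with t < s, u t ^ α t) * ∏ t with s < t, v t ^ α t

theorem prod_pow_sub_prod_pow_eq_sum (u v : σ → A) (α : σ →₀ ℕ) :
    ∏ s, u s ^ α s - ∏ s, v s ^ α s = ∑ s, (u s - v s) * telescopeFactor u v α s := by
  have h := Finset.prod_add_ordered Finset.univ (fun s => v s ^ α s)
    (fun s => u s ^ α s - v s ^ α s)
  simp only [add_sub_cancel] at h
  rw [h, add_sub_cancel_left]
  refine Finset.sum_congr rfl fun s _ => ?_
  rw [telescopeFactor, ← geom_sum₂_mul]
  ring

theorem telescopeFactor_sub_mem {u v : σ → A} {I : Ideal A} (h : ∀ t, u t - v t ∈ I)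
    (α : σ →₀ ℕ) (s : σ) : telescopeFactor u v α s - telescopeFactor v v α s ∈ I := by
  have huv : ∀ t, Ideal.Quotient.mk I (u t) = Ideal.Quotient.mk I (v t) :=
    fun t => Ideal.Quotient.eq.mpr (h t)
  rw [← Ideal.Quotient.eq]
  simp only [telescopeFactor, map_mul, map_sum, map_prod, map_pow, huv]

theorem telescopeFactor_self (v : σ → A) (α : σ →₀ ℕ) (s : σ) :
    telescopeFactor v v α s = α s • ∏ t, v t ^ (α - Finsupp.single s 1 : σ →₀ ℕ) t := by
  have hne : ∀ t, t ≠ s → (α - Finsupp.single s 1 : σ →₀ ℕ) t = α t := fun t ht => by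
    simp [Ne.symm ht]
  have hlt : ∏ t with t < s, v t ^ (α - Finsupp.single s 1 : σ →₀ ℕ) t
      = ∏ t with t < s, v t ^ α t :=
    Finset.prod_congr rfl fun t ht => by rw [hne t (Finset.mem_filter.mp ht).2.ne]
  have hgt : ∏ t with s < t, v t ^ (α - Finsupp.single s 1 : σ →₀ ℕ) t
      = ∏ t with s < t, v t ^ α t :=
    Finset.prod_congr rfl fun t ht => by rw [hne t (Finset.mem_filter.mp ht).2.ne']
  rw [telescopeFactor, geom_sum₂_self, ← Finset.mul_prod_filter_lt_mul_prod_filter_gt, hlt, hgt]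
  simp [nsmul_eq_mul, mul_assoc]

end Telescope

namespace MvPowerSeries

open scoped Matrix

variable {σ τ R : Type*} [CommRing R]

theorem le_order_sum {ι : Type*} (s : Finset ι) (f : ι → MvPowerSeries τ R) {n : ℕ∞}
    (h : ∀ i ∈ s, n ≤ (f i).order) : n ≤ (∑ i ∈ s, f i).order :=
  Finset.sum_induction f (fun g => n ≤ g.order)
    (fun _ _ ha hb => (le_min ha hb).trans min_order_le_add) (by simp) h

theorem sum_le_order_prod_pow {a : σ → MvPowerSeries τ R} (ha : ∀ s, constantCoeff (a s) = 0)
    (α : σ →₀ ℕ) (S : Finset σ) : ((∑ s ∈ S, α s : ℕ) : ℕ∞) ≤ (∏ s ∈ S, a s ^ α s).order := by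
  push_cast
  exact (Finset.sum_le_sum fun s _ => le_order_pow_of_constantCoeff_eq_zero _ (ha s)).trans
    (le_order_prod _ _)

theorem coeff_prod_pow_eq_zero_of_degree_lt [Fintype σ] {a : σ → MvPowerSeries τ R}
    (ha : ∀ s, constantCoeff (a s) = 0) {α : σ →₀ ℕ} {γ : τ →₀ ℕ}
    (h : γ.degree < α.degree) : coeff γ (∏ s, a s ^ α s) = 0 := by
  rw [Finsupp.degree_eq_sum α] at h
  exact coeff_of_lt_order ((Nat.cast_lt.mpr h).trans_le (sum_le_order_prod_pow ha α _))

theorem coeff_subst_eq_sum [Fintype σ] {a : σ → MvPowerSeries τ R}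
    (ha : ∀ s, constantCoeff (a s) = 0) (f : MvPowerSeries σ R) (γ : τ →₀ ℕ)
    {S : Finset (σ →₀ ℕ)} (hS : ∀ α : σ →₀ ℕ, α.degree ≤ γ.degree → α ∈ S) :
    coeff γ (subst a f) = ∑ α ∈ S, coeff α f * coeff γ (∏ s, a s ^ α s) := by
  rw [coeff_subst (hasSubst_of_constantCoeff_zero ha)]
  simp_rw [Finsupp.prod_fintype _ _ (fun _ => pow_zero _), smul_eq_mul]
  refine finsum_eq_sum_of_support_subset _ fun α hα => hS α (not_lt.mp fun h => hα ?_)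
  simp [coeff_prod_pow_eq_zero_of_degree_lt ha h]

def vanishingIdeal (L : LowerSet (τ →₀ ℕ)) : Ideal (MvPowerSeries τ R) where
  carrier := {f | ∀ γ ∈ L, coeff γ f = 0}
  add_mem' hf hg γ hγ := by simp [hf γ hγ, hg γ hγ]
  zero_mem' := by simp
  smul_mem' c f hf γ hγ := by
    classical
    rw [smul_eq_mul, coeff_mul]
    refine Finset.sum_eq_zero fun p hp => ?_
    have hle : p.2 ≤ γ := by
      rw [← Finset.HasAntidiagonal.mem_antidiagonal.mp hp]
      exact le_add_self
    rw [hf p.2 (L.lower hle hγ), mul_zero]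

theorem mem_vanishingIdeal {L : LowerSet (τ →₀ ℕ)} {f : MvPowerSeries τ R} :
    f ∈ vanishingIdeal L ↔ ∀ γ ∈ L, coeff γ f = 0 := Iff.rfl

theorem coeff_eq_of_sub_mem_vanishingIdeal {L : LowerSet (τ →₀ ℕ)} {f g : MvPowerSeries τ R}
    (h : f - g ∈ vanishingIdeal L) {γ : τ →₀ ℕ} (hγ : γ ∈ L) : coeff γ f = coeff γ g :=
  sub_eq_zero.mp (by simpa using h γ hγ)

def weightLE (w : τ → ℕ) (m : ℕ) : LowerSet (τ →₀ ℕ) where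
  carrier := {γ | Finsupp.weight w γ ≤ m}
  lower' γ γ' h hγ := by
    obtain ⟨c, rfl⟩ := exists_add_of_le h
    change Finsupp.weight w (γ' + c) ≤ m at hγ
    exact le_trans (by simp) hγ

theorem mem_weightLE {w : τ → ℕ} {m : ℕ} {γ : τ →₀ ℕ} :
    γ ∈ weightLE w m ↔ Finsupp.weight w γ ≤ m := Iff.rfl

theorem mem_vanishingIdeal_weightLE_of_mul [NoZeroDivisors R] {w : τ → ℕ} {b k : ℕ}
    {f g : MvPowerSeries τ R} {γ₀ : τ →₀ ℕ} (hγ₀ : Finsupp.weight w γ₀ ≤ b)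
    (hf : coeff γ₀ f ≠ 0) (hfg : f * g ∈ vanishingIdeal (weightLE w (b + k))) :
    g ∈ vanishingIdeal (weightLE w k) := by
  intro γ hγ
  by_contra hg
  have hlow : ((b + k + 1 : ℕ) : ℕ∞) ≤ (f * g).weightedOrder w :=
    nat_le_weightedOrder w fun γ' hγ' => hfg γ' (by rw [mem_weightLE]; omega)
  have hf' := (weightedOrder_le w hf).trans (Nat.cast_le.mpr hγ₀)
  have hg' := (weightedOrder_le w hg).trans (Nat.cast_le.mpr (mem_weightLE.mp hγ))
  rw [weightedOrder_mul] at hlow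
  have := hlow.trans (add_le_add hf' hg')
  norm_cast at this
  omega

section DividedDifference

variable [Fintype σ] [LinearOrder σ] {u v : σ → MvPowerSeries τ R}

theorem coeff_telescopeFactor_eq_zero (hu : ∀ s, constantCoeff (u s) = 0)
    (hv : ∀ s, constantCoeff (v s) = 0) {α : σ →₀ ℕ} (s : σ) {γ : τ →₀ ℕ}
    (h : γ.degree + 1 < α.degree) : coeff γ (telescopeFactor u v α s) = 0 := by
  have hgeom : ((α s - 1 : ℕ) : ℕ∞) ≤
      (∑ j ∈ Finset.range (α s), u s ^ j * v s ^ (α s - 1 - j)).order := by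
    refine le_order_sum _ _ fun j hj => le_trans ?_ le_order_mul
    have := Finset.mem_range.mp hj
    exact le_trans (by norm_cast; omega) (add_le_add
      (le_order_pow_of_constantCoeff_eq_zero j (hu s))
      (le_order_pow_of_constantCoeff_eq_zero _ (hv s)))
  have hdeg := Finset.add_sum_filter_lt_add_sum_filter_gt (fun t => α t) s
  rw [← Finsupp.degree_eq_sum] at hdeg
  refine coeff_of_lt_order ?_
  calc (γ.degree : ℕ∞)
      < ((α s - 1 + ∑ t with t < s, α t + ∑ t with s < t, α t : ℕ) : ℕ∞) := by
        norm_cast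
        omega
    _ ≤ _ := by
        rw [Nat.cast_add, Nat.cast_add]
        exact add_le_add (add_le_add hgeom (sum_le_order_prod_pow hu α _))
          (sum_le_order_prod_pow hv α _)
    _ ≤ _ := (add_le_add le_order_mul le_rfl).trans le_order_mul

/-- A divided difference `(f(u) - f(v)) / (u s - v s)`. Only the `α` of degree at most
`|γ| + 1` contribute to the coefficient at `γ`, by `coeff_telescopeFactor_eq_zero`. -/
def divDiff (u v : σ → MvPowerSeries τ R) (f : MvPowerSeries σ R) (s : σ) :
    MvPowerSeries τ R :=
  fun γ => ∑ α ∈ Finsupp.degreeLE σ (γ.degree + 1),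
    coeff α f * coeff γ (telescopeFactor u v α s)

theorem coeff_divDiff (f : MvPowerSeries σ R) (s : σ) (γ : τ →₀ ℕ) :
    coeff γ (divDiff u v f s) = ∑ α ∈ Finsupp.degreeLE σ (γ.degree + 1),
      coeff α f * coeff γ (telescopeFactor u v α s) := rfl

theorem subst_sub_subst_eq_sum_mul_divDiff (hu : ∀ s, constantCoeff (u s) = 0)
    (hv : ∀ s, constantCoeff (v s) = 0) (f : MvPowerSeries σ R) :
    subst u f - subst v f = ∑ s, (u s - v s) * divDiff u v f s := by
  classical
  ext γ
  have hS : ∀ α : σ →₀ ℕ, α.degree ≤ γ.degree → α ∈ Finsupp.degreeLE σ γ.degree :=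
    fun _ => Finsupp.mem_degreeLE.mpr
  rw [map_sub, coeff_subst_eq_sum hu f γ hS, coeff_subst_eq_sum hv f γ hS,
    ← Finset.sum_sub_distrib, map_sum]
  simp_rw [← mul_sub, ← map_sub, prod_pow_sub_prod_pow_eq_sum, map_sum, coeff_mul,
    coeff_divDiff, Finset.mul_sum]
  rw [Finset.sum_comm]
  refine Finset.sum_congr rfl fun s _ => ?_
  rw [Finset.sum_comm]
  refine Finset.sum_congr rfl fun p hp => ?_
  rw [Finset.HasAntidiagonal.mem_antidiagonal] at hp
  by_cases hp1 : p.1 = 0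
  · simp [hp1, hu s, hv s]
  have hdeg : p.2.degree + 1 ≤ γ.degree := by
    rw [← hp, map_add]
    have := mt (Finsupp.degree_eq_zero_iff p.1).mp hp1
    omega
  simp_rw [mul_left_comm (coeff _ f)]
  refine (Finset.sum_subset (fun α hα => hS α ((Finsupp.mem_degreeLE.mp hα).trans hdeg))
    fun α _ hα => ?_).symm
  rw [coeff_telescopeFactor_eq_zero hu hv s (not_le.mp (mt Finsupp.mem_degreeLE.mpr hα)),
    mul_zero, mul_zero]

theorem divDiff_self (hv : ∀ s, constantCoeff (v s) = 0) (f : MvPowerSeries σ R) (s : σ) :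
    divDiff v v f s = subst v (pderiv R s f) := by
  ext γ
  set e : σ →₀ ℕ := Finsupp.single s 1
  have hval : ∀ β : σ →₀ ℕ, coeff β (pderiv R s f) * coeff γ (∏ t, v t ^ β t)
      = coeff (β + e) f * coeff γ (telescopeFactor v v (β + e) s) := fun β => by
    rw [coeff_pderiv, telescopeFactor_self, add_tsub_cancel_right, map_nsmul, nsmul_eq_mul]
    simp [e, mul_assoc]
  rw [coeff_divDiff, coeff_subst_eq_sum hv _ γ fun _ => Finsupp.mem_degreeLE.mpr]
  symm
  refine Finset.sum_bij_ne_zero (fun β _ _ => β + e) (fun β hβ _ => ?_)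
    (fun _ _ _ _ _ _ h => add_right_cancel h) (fun α hα hα0 => ?_) (fun β _ _ => hval β)
  · rw [Finsupp.mem_degreeLE, map_add, Finsupp.degree_single]
    exact Nat.add_le_add_right (Finsupp.mem_degreeLE.mp hβ) 1
  · have hs : e ≤ α := by
      refine Finsupp.single_le_iff.mpr (Nat.one_le_iff_ne_zero.mpr fun h => hα0 ?_)
      rw [telescopeFactor_self, h, zero_smul, map_zero, mul_zero]
    have hdeg := congrArg Finsupp.degree (tsub_add_cancel_of_le hs)
    rw [map_add, Finsupp.degree_single] at hdeg
    refine ⟨α - e, Finsupp.mem_degreeLE.mpr ?_, by rwa [hval, tsub_add_cancel_of_le hs],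
      tsub_add_cancel_of_le hs⟩
    have := Finsupp.mem_degreeLE.mp hα
    omega

theorem divDiff_sub_subst_pderiv_mem (hv : ∀ s, constantCoeff (v s) = 0)
    {L : LowerSet (τ →₀ ℕ)} (h : ∀ t, u t - v t ∈ vanishingIdeal L) (f : MvPowerSeries σ R)
    (s : σ) : divDiff u v f s - subst v (pderiv R s f) ∈ vanishingIdeal L := by
  intro γ hγ
  rw [← divDiff_self hv, map_sub, coeff_divDiff, coeff_divDiff, ← Finset.sum_sub_distrib]
  refine Finset.sum_eq_zero fun α _ => ?_
  rw [← mul_sub, ← map_sub, telescopeFactor_sub_mem h α s γ hγ, mul_zero]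

end DividedDifference

theorem exists_subst_sub_subst_eq_sum {σ : Type*} [Fintype σ] {u v : σ → MvPowerSeries τ R}
    (hu : ∀ s, constantCoeff (u s) = 0) (hv : ∀ s, constantCoeff (v s) = 0)
    (f : MvPowerSeries σ R) :
    ∃ C : σ → MvPowerSeries τ R, subst u f - subst v f = ∑ s, (u s - v s) * C s ∧
      ∀ L : LowerSet (τ →₀ ℕ), (∀ t, u t - v t ∈ vanishingIdeal L) →
        ∀ s, C s - subst v (pderiv R s f) ∈ vanishingIdeal L := by
  let : LinearOrder σ := LinearOrder.lift' _ (Fintype.equivFin σ).injective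
  exact ⟨divDiff u v f, subst_sub_subst_eq_sum_mul_divDiff hu hv f,
    fun _ h s => divDiff_sub_subst_pderiv_mem hv h f s⟩

theorem sub_mem_vanishingIdeal_weightLE_of_subst_sub_mem [NoZeroDivisors R]
    {κ ι : Type*} [Fintype κ] [Fintype ι] [DecidableEq ι]
    {c : κ → MvPowerSeries τ R} {φ φ₀ : ι → MvPowerSeries τ R}
    (hc : ∀ j, constantCoeff (c j) = 0) (hφ : ∀ l, constantCoeff (φ l) = 0)
    (hφ₀ : ∀ l, constantCoeff (φ₀ l) = 0) (P : ι → MvPowerSeries (κ ⊕ ι) R)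
    (w : τ → ℕ) {γ₀ : τ →₀ ℕ}
    (hdet : coeff γ₀ (subst (Sum.elim c φ₀)
      (Matrix.of fun i l => pderiv R (Sum.inr l) (P i)).det) ≠ 0)
    (hjet : ∀ l, φ l - φ₀ l ∈ vanishingIdeal (LowerSet.Iic γ₀)) {k : ℕ}
    (hP : ∀ i, subst (Sum.elim c φ) (P i) - subst (Sum.elim c φ₀) (P i) ∈
      vanishingIdeal (weightLE w (Finsupp.weight w γ₀ + k))) (l : ι) :
    φ l - φ₀ l ∈ vanishingIdeal (weightLE w k) := by
  have hu : ∀ s, constantCoeff (Sum.elim c φ s) = 0 := Sum.rec hc hφ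
  have hv : ∀ s, constantCoeff (Sum.elim c φ₀ s) = 0 := Sum.rec hc hφ₀
  have huv : ∀ s, Sum.elim c φ s - Sum.elim c φ₀ s ∈ vanishingIdeal (LowerSet.Iic γ₀) :=
    Sum.rec (fun j => by simp) hjet
  choose C hC hCJ using fun i => exists_subst_sub_subst_eq_sum hu hv (P i)
  let M : Matrix ι ι (MvPowerSeries τ R) := Matrix.of fun i l => C i (Sum.inr l)
  have hMδ : M *ᵥ (φ - φ₀) = fun i => subst (Sum.elim c φ) (P i) - subst (Sum.elim c φ₀) (P i) := by
    funext i
    simp [hC i, Fintype.sum_sum_type, M, Matrix.mulVec, dotProduct, mul_comm]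
  have hdetM : coeff γ₀ M.det ≠ 0 := by
    let substHom := (substAlgHom (R := R) (hasSubst_of_constantCoeff_zero hv)).toRingHom
    have hJ : M.det - (substHom.mapMatrix (Matrix.of fun i l => pderiv R (Sum.inr l) (P i))).det ∈
        vanishingIdeal (LowerSet.Iic γ₀) :=
      Matrix.det_sub_det_mem fun i l => by simpa [M, substHom] using hCJ i _ huv (Sum.inr l)
    rw [coeff_eq_of_sub_mem_vanishingIdeal hJ (LowerSet.mem_Iic_iff.mpr le_rfl),
      ← RingHom.map_det]
    simpa [substHom] using hdet
  have hdetδ : M.det * (φ l - φ₀ l) = (M.adjugate *ᵥ (M *ᵥ (φ - φ₀))) l := by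
    rw [Matrix.mulVec_mulVec, Matrix.adjugate_mul, Matrix.smul_mulVec, Matrix.one_mulVec]
    rfl
  refine mem_vanishingIdeal_weightLE_of_mul le_rfl hdetM ?_
  rw [hdetδ, hMδ]
  exact Ideal.sum_mem _ fun i _ => Ideal.mul_mem_left _ _ (hP i)

end MvPowerSeries

namespace Paper

variable {σ τ : Type*}

theorem msize_eq_degree (α : σ →₀ ℕ) : msize α = α.degree := rfl

theorem pd_eq_pderiv (s : σ) (f : MvPowerSeries σ ℂ) : pd s f = pderiv ℂ s f := by
  ext α
  rw [coeff_pderiv]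
  show (((Finsupp.single s 1).prod fun i k => (α i + k).choose k * k.factorial : ℕ) : ℂ) *
    MvPowerSeries.coeff (α + Finsupp.single s 1) f = _
  simp [Finsupp.prod_single_index, mul_comm]

theorem substC_eq_subst [Fintype σ] [DecidableEq σ] {a : σ → MvPowerSeries τ ℂ}
    (ha : ∀ s, constantCoeff (a s) = 0) (f : MvPowerSeries σ ℂ) : substC a f = subst a f := by
  ext γ
  refine (coeff_subst_eq_sum ha f γ fun α hα => Finset.mem_Iic.mpr fun s => ?_).symm
  simpa [msize_eq_degree] using (Finsupp.le_degree s α).trans hα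

theorem coeff_dpow_eq_zero_iff {β α : σ →₀ ℕ} {f : MvPowerSeries σ ℂ} :
    coeff α (dpow β f) = 0 ↔ coeff (α + β) f = 0 := by
  refine mul_eq_zero_iff_left (Nat.cast_ne_zero.mpr (Finset.prod_ne_zero_iff.mpr fun i _ => ?_))
  exact mul_ne_zero (Nat.choose_pos le_add_self).ne' (Nat.factorial_ne_zero _)

theorem coeff_dpow_eq_coeff_dpow_iff {β α : σ →₀ ℕ} {f g : MvPowerSeries σ ℂ} :
    coeff α (dpow β f) = coeff α (dpow β g) ↔ coeff (α + β) f = coeff (α + β) g := by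
  have hsub : dpow β (f - g) = dpow β f - dpow β g := by
    ext γ
    simp only [map_sub]
    exact mul_sub _ _ _
  rw [← sub_eq_zero, ← map_sub, ← hsub, coeff_dpow_eq_zero_iff, map_sub, sub_eq_zero]

theorem dAt0_eq_dAt0_iff {e : σ → τ} {β : τ →₀ ℕ} {f g : MvPowerSeries τ ℂ} :
    dAt0 e β f = dAt0 e β g ↔ ∀ γ : σ →₀ ℕ,
      coeff (Finsupp.mapDomain e γ + β) f = coeff (Finsupp.mapDomain e γ + β) g :=
  funext_iff.trans (forall_congr' fun _ => coeff_dpow_eq_coeff_dpow_iff)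

section SumIndex

variable {A B : Type*}

theorem weight_sumElim (a : A →₀ ℕ) (b : B →₀ ℕ) :
    Finsupp.weight (Sum.elim 0 1) (Finsupp.sumElim a b) = b.degree := by
  rw [Finsupp.weight_apply, Finsupp.sum_sumElim]
  simp [Finsupp.degree_apply, Finsupp.sum]

theorem exists_eq_sumElim (γ : A ⊕ B →₀ ℕ) : ∃ a b, γ = Finsupp.sumElim a b :=
  ⟨_, _, (Finsupp.sumFinsuppEquivProdFinsupp.symm_apply_apply γ).symm⟩

theorem sub_mem_vanishingIdeal_Iic_sumElim {f g : MvPowerSeries (A ⊕ B) ℂ}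
    {α₀ : A →₀ ℕ} {β₀ : B →₀ ℕ}
    (h : ∀ (α : A →₀ ℕ) (β : B →₀ ℕ), msize α ≤ msize α₀ → msize β ≤ msize β₀ →
      constantCoeff (dpow (Finsupp.mapDomain Sum.inl α + Finsupp.mapDomain Sum.inr β) f) =
        constantCoeff (dpow (Finsupp.mapDomain Sum.inl α + Finsupp.mapDomain Sum.inr β) g)) :
    f - g ∈ vanishingIdeal (LowerSet.Iic (Finsupp.sumElim α₀ β₀)) := by
  intro γ hγ
  obtain ⟨α, β, rfl⟩ := exists_eq_sumElim γ
  rw [LowerSet.mem_Iic_iff] at hγ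
  have hα : α ≤ α₀ := fun a => by simpa using hγ (Sum.inl a)
  have hβ : β ≤ β₀ := fun b => by simpa using hγ (Sum.inr b)
  have := h α β (Finsupp.degree_mono hα) (Finsupp.degree_mono hβ)
  rw [← coeff_zero_eq_constantCoeff_apply, ← coeff_zero_eq_constantCoeff_apply,
    coeff_dpow_eq_coeff_dpow_iff, zero_add, ← Finsupp.sumElim_eq_add] at this
  rw [map_sub, this, sub_self]

theorem sub_mem_vanishingIdeal_weightLE_iff {f g : MvPowerSeries (A ⊕ B) ℂ} {m : ℕ} :
    f - g ∈ vanishingIdeal (weightLE (Sum.elim 0 1) m) ↔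
      ∀ β : B →₀ ℕ, msize β ≤ m → dAt0 (Sum.inl : A → A ⊕ B) (Finsupp.mapDomain Sum.inr β) f =
        dAt0 (Sum.inl : A → A ⊕ B) (Finsupp.mapDomain Sum.inr β) g := by
  simp only [dAt0_eq_dAt0_iff, ← Finsupp.sumElim_eq_add, mem_vanishingIdeal, mem_weightLE,
    map_sub, sub_eq_zero]
  constructor
  · exact fun h β hβ α => h _ (by rwa [weight_sumElim])
  · intro h γ hγ
    obtain ⟨α, β, rfl⟩ := exists_eq_sumElim γ
    rw [weight_sumElim] at hγ
    exact h β hγ α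

end SumIndex

theorem stmt_16_general (n₁ d N : ℕ)
    (P : Fin N → MvPowerSeries (Fin n₁ ⊕ Fin N) ℂ)
    (φ₀ : Fin N → MvPowerSeries (Fin n₁ ⊕ Fin d) ℂ)
    (hφ0 : ∀ i, MvPowerSeries.constantCoeff (φ₀ i) = 0)
    (α₀ : Fin n₁ →₀ ℕ) (β₀ : Fin d →₀ ℕ)
    (hα₀β₀ : MvPowerSeries.constantCoeff
      (dpow (Finsupp.mapDomain Sum.inl α₀ + Finsupp.mapDomain Sum.inr β₀)
        (substC (fun v : Fin n₁ ⊕ Fin N => match v with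
          | Sum.inl i => MvPowerSeries.X (Sum.inl i)
          | Sum.inr i => φ₀ i)
        ((Matrix.of fun i l : Fin N => pd (Sum.inr l) (P i)).det))) ≠ 0) :
    ∀ φ : Fin N → MvPowerSeries (Fin n₁ ⊕ Fin d) ℂ,
      (∀ (α : Fin n₁ →₀ ℕ) (β : Fin d →₀ ℕ), msize α ≤ msize α₀ → msize β ≤ msize β₀ →
        ∀ i, MvPowerSeries.constantCoeff
            (dpow (Finsupp.mapDomain Sum.inl α + Finsupp.mapDomain Sum.inr β) (φ i))
          = MvPowerSeries.constantCoeff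
            (dpow (Finsupp.mapDomain Sum.inl α + Finsupp.mapDomain Sum.inr β) (φ₀ i))) →
      ∀ k : ℕ,
      (∀ β : Fin d →₀ ℕ, msize β ≤ msize β₀ + k → ∀ i,
        dAt0 (Sum.inl : Fin n₁ → Fin n₁ ⊕ Fin d) (Finsupp.mapDomain Sum.inr β)
          (substC (fun v : Fin n₁ ⊕ Fin N => match v with
            | Sum.inl i' => MvPowerSeries.X (Sum.inl i')
            | Sum.inr i' => φ i') (P i))
        = dAt0 (Sum.inl : Fin n₁ → Fin n₁ ⊕ Fin d) (Finsupp.mapDomain Sum.inr β)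
          (substC (fun v : Fin n₁ ⊕ Fin N => match v with
            | Sum.inl i' => MvPowerSeries.X (Sum.inl i')
            | Sum.inr i' => φ₀ i') (P i))) →
      ∀ β : Fin d →₀ ℕ, msize β ≤ k → ∀ i,
        dAt0 (Sum.inl : Fin n₁ → Fin n₁ ⊕ Fin d) (Finsupp.mapDomain Sum.inr β) (φ i)
        = dAt0 (Sum.inl : Fin n₁ → Fin n₁ ⊕ Fin d) (Finsupp.mapDomain Sum.inr β) (φ₀ i) := by
  intro φ hjet k hP β hβ i
  have hδ := fun l => sub_mem_vanishingIdeal_Iic_sumElim fun α β hα hβ => hjet α β hα hβ l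
  have hφ : ∀ l, constantCoeff (φ l) = 0 := fun l => by
    simpa [hφ0 l, sub_eq_zero] using hδ l 0 (LowerSet.mem_Iic_iff.mpr bot_le)
  have hX : ∀ j : Fin n₁, constantCoeff (X (Sum.inl j) : MvPowerSeries (Fin n₁ ⊕ Fin d) ℂ) = 0 :=
    fun j => constantCoeff_X _
  have hmatch : ∀ ψ : Fin N → MvPowerSeries (Fin n₁ ⊕ Fin d) ℂ,
      (fun v : Fin n₁ ⊕ Fin N => match v with
        | Sum.inl i' => MvPowerSeries.X (Sum.inl i')
        | Sum.inr i' => ψ i') = Sum.elim (fun j => X (Sum.inl j)) ψ :=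
    fun ψ => funext fun v => by cases v <;> rfl
  have hsubst : ∀ ψ : Fin N → MvPowerSeries (Fin n₁ ⊕ Fin d) ℂ, (∀ l, constantCoeff (ψ l) = 0) →
      ∀ s, constantCoeff (Sum.elim (fun j => X (Sum.inl j)) ψ s) = 0 :=
    fun _ hψ => Sum.forall.mpr ⟨hX, hψ⟩
  simp only [hmatch, pd_eq_pderiv, substC_eq_subst (hsubst _ hφ), substC_eq_subst (hsubst _ hφ0)]
    at hα₀β₀ hP
  rw [← coeff_zero_eq_constantCoeff_apply, Ne, coeff_dpow_eq_zero_iff, zero_add,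
    ← Finsupp.sumElim_eq_add] at hα₀β₀
  refine (sub_mem_vanishingIdeal_weightLE_iff.mp ?_) β hβ
  refine sub_mem_vanishingIdeal_weightLE_of_subst_sub_mem hX hφ hφ0 P _ hα₀β₀ hδ
    (fun i => sub_mem_vanishingIdeal_weightLE_iff.mpr ?_) i
  rw [weight_sumElim]
  exact fun β hβ => hP β hβ i

theorem stmt_16 (n₁ d N : ℕ) (h1 : 1 ≤ n₁) (h2 : 1 ≤ d) (h3 : 1 ≤ N)
    (P : Fin N → MvPowerSeries (Fin n₁ ⊕ Fin N) ℂ)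
    (φ₀ : Fin N → MvPowerSeries (Fin n₁ ⊕ Fin d) ℂ)
    (hφ0 : ∀ i, MvPowerSeries.constantCoeff (φ₀ i) = 0)
    (hdet : substC (fun v : Fin n₁ ⊕ Fin N => match v with
        | Sum.inl i => MvPowerSeries.X (Sum.inl i)
        | Sum.inr i => φ₀ i)
      ((Matrix.of fun i l : Fin N => pd (Sum.inr l) (P i)).det) ≠ 0)
    (α₀ : Fin n₁ →₀ ℕ) (β₀ : Fin d →₀ ℕ)
    (hα₀β₀ : MvPowerSeries.constantCoeff
      (dpow (Finsupp.mapDomain Sum.inl α₀ + Finsupp.mapDomain Sum.inr β₀)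
        (substC (fun v : Fin n₁ ⊕ Fin N => match v with
          | Sum.inl i => MvPowerSeries.X (Sum.inl i)
          | Sum.inr i => φ₀ i)
        ((Matrix.of fun i l : Fin N => pd (Sum.inr l) (P i)).det))) ≠ 0) :
    ∀ φ : Fin N → MvPowerSeries (Fin n₁ ⊕ Fin d) ℂ,
      (∀ (α : Fin n₁ →₀ ℕ) (β : Fin d →₀ ℕ), msize α ≤ msize α₀ → msize β ≤ msize β₀ →
        ∀ i, MvPowerSeries.constantCoeff
            (dpow (Finsupp.mapDomain Sum.inl α + Finsupp.mapDomain Sum.inr β) (φ i))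
          = MvPowerSeries.constantCoeff
            (dpow (Finsupp.mapDomain Sum.inl α + Finsupp.mapDomain Sum.inr β) (φ₀ i))) →
      ∀ k : ℕ,
      (∀ β : Fin d →₀ ℕ, msize β ≤ msize β₀ + k → ∀ i,
        dAt0 (Sum.inl : Fin n₁ → Fin n₁ ⊕ Fin d) (Finsupp.mapDomain Sum.inr β)
          (substC (fun v : Fin n₁ ⊕ Fin N => match v with
            | Sum.inl i' => MvPowerSeries.X (Sum.inl i')
            | Sum.inr i' => φ i') (P i))
        = dAt0 (Sum.inl : Fin n₁ → Fin n₁ ⊕ Fin d) (Finsupp.mapDomain Sum.inr β)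
          (substC (fun v : Fin n₁ ⊕ Fin N => match v with
            | Sum.inl i' => MvPowerSeries.X (Sum.inl i')
            | Sum.inr i' => φ₀ i') (P i))) →
      ∀ β : Fin d →₀ ℕ, msize β ≤ k → ∀ i,
        dAt0 (Sum.inl : Fin n₁ → Fin n₁ ⊕ Fin d) (Finsupp.mapDomain Sum.inr β) (φ i)
        = dAt0 (Sum.inl : Fin n₁ → Fin n₁ ⊕ Fin d) (Finsupp.mapDomain Sum.inr β) (φ₀ i) :=
  stmt_16_general n₁ d N P φ₀ hφ0 α₀ β₀ hα₀β₀

end Paper
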